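/- Let W₁ and W₂ be graphons on the same probability space S, and let W₁' be a {0,1}-valued step graphon on S whose associated partition has n parts. Then ‖W₁ − W₂‖_{L¹(S²)} ≤ n² ‖W₁ − W₂‖_□ + 2‖W₁ − W₁'‖_{L¹(S²)}. -/

import Mathlib

open MeasureTheory

/-- The cut norm defined with measurable sets. -/
noncomputable def cutNorm1 {S : Type*} [MeasurableSpace S] (μ : Measure S)
    (W : S → S → ℝ) : ℝ :=
  sSup {r : ℝ | ∃ A B : Set S, MeasurableSet A ∧ MeasurableSet B ∧
    r = |∫ p in A ×ˢ B, W p.1 p.2 ∂(μ.prod μ)|}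

/-!
Write `W₁ - W₂ = (W₁ - W₁') + (W₁' - W₂)`. On each block `Aᵢ × Aⱼ` the step graphon `W₁'` is
constantly `0` or `1`, so `W₁' - W₂` does not change sign there and its `L¹` mass on the block is
`|∫ (W₁' - W₂)| ≤ |∫ (W₁ - W₂)| + ∫ |W₁ - W₁'| ≤ ‖W₁ - W₂‖_□ + ∫ |W₁ - W₁'|`.
Summing over the `n²` blocks and adding the `L¹` norm of `W₁ - W₁'` gives the bound.
-/

open Set

section

variable {X : Type*} [MeasurableSpace X]

structure IsMeasurablePartition {ι : Type*} (B : ι → Set X) : Prop where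
  measurableSet : ∀ i, MeasurableSet (B i)
  pairwise_disjoint : Pairwise (Function.onFun Disjoint B)
  iUnion_eq_univ : ⋃ i, B i = univ

namespace IsMeasurablePartition

variable {ι : Type*} {B : ι → Set X}

theorem prod {κ Y : Type*} [MeasurableSpace Y] {C : κ → Set Y}
    (hB : IsMeasurablePartition B) (hC : IsMeasurablePartition C) :
    IsMeasurablePartition fun ij : ι × κ => B ij.1 ×ˢ C ij.2 where
  measurableSet ij := (hB.measurableSet ij.1).prod (hC.measurableSet ij.2)
  pairwise_disjoint := by
    rintro ⟨i, j⟩ ⟨k, l⟩ hne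
    refine disjoint_prod.2 ?_
    by_cases hik : i = k
    · subst hik
      exact Or.inr (hC.pairwise_disjoint fun hjl => hne (Prod.ext rfl hjl))
    · exact Or.inl (hB.pairwise_disjoint hik)
  iUnion_eq_univ := by
    rw [iUnion_prod, hB.iUnion_eq_univ, hC.iUnion_eq_univ, univ_prod_univ]

theorem integral_eq_sum {E : Type*} [NormedAddCommGroup E] [NormedSpace ℝ E] [Fintype ι]
    (hB : IsMeasurablePartition B) {μ : Measure X} {f : X → E} (hf : Integrable f μ) :
    ∫ x, f x ∂μ = ∑ i, ∫ x in B i, f x ∂μ := by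
  rw [← setIntegral_univ, ← hB.iUnion_eq_univ,
    integral_iUnion_fintype hB.measurableSet hB.pairwise_disjoint fun _ => hf.integrableOn]

end IsMeasurablePartition

theorem integral_abs_eq_abs_integral_of_nonneg_or_nonpos {μ : Measure X} {w : X → ℝ}
    (hw : 0 ≤ᵐ[μ] w ∨ w ≤ᵐ[μ] 0) : ∫ x, |w x| ∂μ = |∫ x, w x ∂μ| := by
  rcases hw with hw | hw
  · rw [abs_of_nonneg (integral_nonneg_of_ae hw)]
    exact integral_congr_ae (hw.mono fun x hx => abs_of_nonneg hx)
  · rw [abs_of_nonpos (integral_nonpos_of_ae hw), ← integral_neg]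
    exact integral_congr_ae (hw.mono fun x hx => abs_of_nonpos hx)

theorem integral_abs_le_sum_abs_setIntegral_add_two_mul {ι : Type*} [Fintype ι]
    {B : ι → Set X} (hB : IsMeasurablePartition B) {μ : Measure X} {u w : X → ℝ}
    (hu : Integrable u μ) (hw : Integrable w μ)
    (hsign : ∀ i, (∀ x ∈ B i, 0 ≤ w x) ∨ (∀ x ∈ B i, w x ≤ 0)) :
    ∫ x, |u x| ∂μ ≤ ∑ i, |∫ x in B i, u x ∂μ| + 2 * ∫ x, |u x - w x| ∂μ := by
  have hcell (i : ι) :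
      ∫ x in B i, |w x| ∂μ ≤ |∫ x in B i, u x ∂μ| + ∫ x in B i, |u x - w x| ∂μ := by
    have hsign' : 0 ≤ᵐ[μ.restrict (B i)] w ∨ w ≤ᵐ[μ.restrict (B i)] 0 :=
      (hsign i).imp (ae_restrict_of_forall_mem (hB.measurableSet i))
        (ae_restrict_of_forall_mem (hB.measurableSet i))
    calc ∫ x in B i, |w x| ∂μ = |∫ x in B i, w x ∂μ| :=
          integral_abs_eq_abs_integral_of_nonneg_or_nonpos hsign'
      _ = |∫ x in B i, u x ∂μ - ∫ x in B i, (u x - w x) ∂μ| := by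
          rw [integral_sub hu.integrableOn hw.integrableOn, sub_sub_cancel]
      _ ≤ |∫ x in B i, u x ∂μ| + |∫ x in B i, (u x - w x) ∂μ| := abs_sub _ _
      _ ≤ |∫ x in B i, u x ∂μ| + ∫ x in B i, |u x - w x| ∂μ := by
          gcongr
          exact abs_integral_le_integral_abs
  have huw : Integrable (fun x => |u x - w x|) μ := (hu.sub hw).abs
  calc ∫ x, |u x| ∂μ ≤ ∫ x, (|u x - w x| + |w x|) ∂μ :=
        integral_mono hu.abs (huw.add hw.abs) fun x => by
          simpa using abs_sub_abs_le_abs_sub (u x) (w x)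
    _ = ∫ x, |u x - w x| ∂μ + ∑ i, ∫ x in B i, |w x| ∂μ := by
        rw [integral_add huw hw.abs, hB.integral_eq_sum hw.abs]
    _ ≤ ∫ x, |u x - w x| ∂μ +
          ∑ i, (|∫ x in B i, u x ∂μ| + ∫ x in B i, |u x - w x| ∂μ) := by
        gcongr with i
        exact hcell i
    _ = ∑ i, |∫ x in B i, u x ∂μ| + 2 * ∫ x, |u x - w x| ∂μ := by
        rw [Finset.sum_add_distrib, ← hB.integral_eq_sum huw]
        ring

theorem abs_setIntegral_prod_le_cutNorm1 {μ : Measure X} {W : X → X → ℝ}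
    (hW : Integrable (fun p : X × X => W p.1 p.2) (μ.prod μ))
    {A B : Set X} (hA : MeasurableSet A) (hB : MeasurableSet B) :
    |∫ p in A ×ˢ B, W p.1 p.2 ∂(μ.prod μ)| ≤ cutNorm1 μ W := by
  refine le_csSup ⟨∫ p, |W p.1 p.2| ∂(μ.prod μ), ?_⟩ ⟨A, B, hA, hB, rfl⟩
  rintro r ⟨A', B', -, -, rfl⟩
  exact abs_integral_le_integral_abs.trans
    (setIntegral_le_integral hW.abs (ae_of_all _ fun _ => abs_nonneg _))

end

theorem sub_nonneg_or_sub_nonpos_on_of_const_zero_or_one {α : Type*} {E : Set α}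
    {a b : α → ℝ} (ha : ∀ x ∈ E, a x = 0 ∨ a x = 1) (hb : ∀ x ∈ E, b x ∈ Icc 0 1)
    (hconst : ∃ c, ∀ x ∈ E, a x = c) :
    (∀ x ∈ E, 0 ≤ a x - b x) ∨ (∀ x ∈ E, a x - b x ≤ 0) := by
  obtain ⟨c, hc⟩ := hconst
  by_cases hc1 : c = 1
  · left
    intro x hx
    linarith [hc x hx, (hb x hx).2]
  · right
    intro x hx
    have ha0 : a x = 0 := (ha x hx).resolve_right (by rw [hc x hx]; exact hc1)
    linarith [(hb x hx).1]

theorem L1_le_cutNorm_add_stepApprox_general {S : Type*} [MeasurableSpace S]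
    (μ : Measure S) [IsProbabilityMeasure μ] (n : ℕ)
    (W₁ W₂ W₁' : S → S → ℝ)
    (hW₁m : Measurable (fun p : S × S => W₁ p.1 p.2))
    (hW₂m : Measurable (fun p : S × S => W₂ p.1 p.2))
    (hW₁'m : Measurable (fun p : S × S => W₁' p.1 p.2))
    (hW₁r : ∀ x y, W₁ x y ∈ Set.Icc (0 : ℝ) 1)
    (hW₂r : ∀ x y, W₂ x y ∈ Set.Icc (0 : ℝ) 1)
    (hW₁'r : ∀ x y, W₁' x y = 0 ∨ W₁' x y = 1)
    (A : Fin n → Set S)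
    (hAmeas : ∀ i, MeasurableSet (A i))
    (hAdisj : Pairwise (Function.onFun Disjoint A))
    (hAcover : (⋃ i, A i) = Set.univ)
    (hstep : ∀ i j, ∃ c : ℝ, ∀ x ∈ A i, ∀ y ∈ A j, W₁' x y = c) :
    (∫ p, |W₁ p.1 p.2 - W₂ p.1 p.2| ∂(μ.prod μ)) ≤
      (n : ℝ) ^ 2 * cutNorm1 μ (fun x y => W₁ x y - W₂ x y) +
        2 * ∫ p, |W₁ p.1 p.2 - W₁' p.1 p.2| ∂(μ.prod μ) := by
  have hW₁'r' (x y : S) : W₁' x y ∈ Icc (0 : ℝ) 1 := by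
    rcases hW₁'r x y with h | h <;> simp [h]
  have hI (W : S → S → ℝ) (hm : Measurable fun p : S × S => W p.1 p.2)
      (hr : ∀ x y, W x y ∈ Icc (0 : ℝ) 1) : Integrable (fun p : S × S => W p.1 p.2) (μ.prod μ) :=
    .of_mem_Icc 0 1 hm.aemeasurable (ae_of_all _ fun p => hr p.1 p.2)
  have hf : Integrable (fun p : S × S => W₁ p.1 p.2 - W₂ p.1 p.2) (μ.prod μ) :=
    (hI W₁ hW₁m hW₁r).sub (hI W₂ hW₂m hW₂r)
  have hw : Integrable (fun p : S × S => W₁' p.1 p.2 - W₂ p.1 p.2) (μ.prod μ) :=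
    (hI W₁' hW₁'m hW₁'r').sub (hI W₂ hW₂m hW₂r)
  have hA : IsMeasurablePartition A := ⟨hAmeas, hAdisj, hAcover⟩
  have hsign (ij : Fin n × Fin n) :
      (∀ p ∈ A ij.1 ×ˢ A ij.2, 0 ≤ W₁' p.1 p.2 - W₂ p.1 p.2) ∨
        (∀ p ∈ A ij.1 ×ˢ A ij.2, W₁' p.1 p.2 - W₂ p.1 p.2 ≤ 0) :=
    have ⟨c, hc⟩ := hstep ij.1 ij.2
    sub_nonneg_or_sub_nonpos_on_of_const_zero_or_one (fun p _ => hW₁'r p.1 p.2)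
      (fun p _ => hW₂r p.1 p.2) ⟨c, fun p hp => hc _ hp.1 _ hp.2⟩
  calc ∫ p, |W₁ p.1 p.2 - W₂ p.1 p.2| ∂(μ.prod μ)
      ≤ ∑ ij : Fin n × Fin n,
          |∫ p in A ij.1 ×ˢ A ij.2, (W₁ p.1 p.2 - W₂ p.1 p.2) ∂(μ.prod μ)| +
        2 * ∫ p, |W₁ p.1 p.2 - W₁' p.1 p.2| ∂(μ.prod μ) := by
        simpa only [sub_sub_sub_cancel_right] using
          integral_abs_le_sum_abs_setIntegral_add_two_mul (hA.prod hA) hf hw hsign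
    _ ≤ ∑ _ij : Fin n × Fin n, cutNorm1 μ (fun x y => W₁ x y - W₂ x y) +
        2 * ∫ p, |W₁ p.1 p.2 - W₁' p.1 p.2| ∂(μ.prod μ) := by
        gcongr
        exact abs_setIntegral_prod_le_cutNorm1 (W := fun x y => W₁ x y - W₂ x y) hf
          (hAmeas _) (hAmeas _)
    _ = _ := by simp [sq]

/-- If `W₁, W₂` are graphons on `S` and `W₁'` is a `{0,1}`-valued step graphon with an
associated partition into `n` parts, then
`‖W₁ − W₂‖₁ ≤ n² ‖W₁ − W₂‖_□ + 2 ‖W₁ − W₁'‖₁`. -/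
theorem L1_le_cutNorm_add_stepApprox {S : Type*} [MeasurableSpace S]
    (μ : Measure S) [IsProbabilityMeasure μ] (n : ℕ)
    (W₁ W₂ W₁' : S → S → ℝ)
    (hW₁m : Measurable (fun p : S × S => W₁ p.1 p.2))
    (hW₂m : Measurable (fun p : S × S => W₂ p.1 p.2))
    (hW₁'m : Measurable (fun p : S × S => W₁' p.1 p.2))
    (hW₁sym : ∀ x y, W₁ x y = W₁ y x)
    (hW₂sym : ∀ x y, W₂ x y = W₂ y x)
    (hW₁'sym : ∀ x y, W₁' x y = W₁' y x)
    (hW₁r : ∀ x y, W₁ x y ∈ Set.Icc (0 : ℝ) 1)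
    (hW₂r : ∀ x y, W₂ x y ∈ Set.Icc (0 : ℝ) 1)
    (hW₁'r : ∀ x y, W₁' x y = 0 ∨ W₁' x y = 1)
    (A : Fin n → Set S)
    (hAmeas : ∀ i, MeasurableSet (A i))
    (hAdisj : Pairwise (Function.onFun Disjoint A))
    (hAcover : (⋃ i, A i) = Set.univ)
    (hstep : ∀ i j, ∃ c : ℝ, ∀ x ∈ A i, ∀ y ∈ A j, W₁' x y = c) :
    (∫ p, |W₁ p.1 p.2 - W₂ p.1 p.2| ∂(μ.prod μ)) ≤
      (n : ℝ) ^ 2 * cutNorm1 μ (fun x y => W₁ x y - W₂ x y) +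
        2 * ∫ p, |W₁ p.1 p.2 - W₁' p.1 p.2| ∂(μ.prod μ) :=
  L1_le_cutNorm_add_stepApprox_general μ n W₁ W₂ W₁' hW₁m hW₂m hW₁'m hW₁r hW₂r hW₁'r A hAmeas hAdisj
    hAcover hstep
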